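/- Let I_A and I_B be two MatP instances on the same bipartite graph G = (W ∪ F, E) that differ only in the preference order of a single agent x, let e = {x,y} ∈ E, and let I_H be a hybrid instance of (I_A, I_B) with respect to e. Then for every matching M with e ∈ M and every matching M', there exists X ∈ {A, B} such that Δ^{I_H}(M, M') = Δ^{I_X}(M, M'). -/
import Mathlib


open Classical

/-- An instance of matching under preferences (MatP): a bipartite graph on
workers `W` and firms `F` together with, for each agent, a strict linear order
on its neighbors (`pref x y z` means `x` strictly prefers `y` to `z`). -/
structure MatP (α : Type*) where
  W : Finset α
  F : Finset α
  disjWF : Disjoint W F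
  adj : α → α → Prop
  adj_symm : ∀ x y, adj x y → adj y x
  adj_loopless : ∀ x, ¬ adj x x
  adj_bipartite : ∀ x y, adj x y → (x ∈ W ∧ y ∈ F) ∨ (x ∈ F ∧ y ∈ W)
  pref : α → α → α → Prop
  pref_adj : ∀ x y z, pref x y z → adj x y ∧ adj x z
  pref_trans : ∀ x y z w, pref x y z → pref x z w → pref x y w
  pref_irrefl : ∀ x y, ¬ pref x y y
  pref_total : ∀ x y z, adj x y → adj x z → y ≠ z → pref x y z ∨ pref x z y

/-- `M` is a matching of instance `I`, encoded as a symmetric partial partner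
function: `M x = some y` means the edge `{x,y}` belongs to the matching. -/
def IsMatching {α : Type*} (I : MatP α) (M : α → Option α) : Prop :=
  (∀ x y, M x = some y → I.adj x y) ∧ (∀ x y, M x = some y → M y = some x)

/-- Agent `x` prefers (partner) option `o` to option `o'`:
being matched beats being unmatched, and among partners `x` uses `I.pref`. -/
def Better {α : Type*} (I : MatP α) (x : α) : Option α → Option α → Prop
  | some _, none => True
  | some y, some z => I.pref x y z
  | none, _ => False

/-- The vote of agent `x` between partner options `o` and `o'`. -/
noncomputable def voteO {α : Type*} (I : MatP α) (x : α) (o o' : Option α) : ℤ :=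
  if Better I x o o' then 1 else if Better I x o' o then -1 else 0

/-- Popularity margin `Δ^I(M,M')`: the sum of all agents' votes. -/
noncomputable def margin {α : Type*} [DecidableEq α]
    (I : MatP α) (M M' : α → Option α) : ℤ :=
  ∑ x ∈ I.W ∪ I.F, voteO I x (M x) (M' x)

/-- `M` is popular for `I`: it does not lose against any matching. -/
def Popular {α : Type*} [DecidableEq α] (I : MatP α) (M : α → Option α) : Prop :=
  ∀ M', IsMatching I M' → 0 ≤ margin I M M'

/-- `IA` and `IB` are MatP instances on the same bipartite graph that differ
only in the preference order of the single agent `x`. -/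
def SameExcept {α : Type*} (IA IB : MatP α) (x : α) : Prop :=
  IA.W = IB.W ∧ IA.F = IB.F ∧ IA.adj = IB.adj ∧
  ∀ z, z ≠ x → ∀ u v, (IA.pref z u v ↔ IB.pref z u v)

/-- `IH` is a hybrid instance of `(IA, IB)` with respect to the edge `{x,y}`:
same graph, all agents other than `x` keep their `IA` preferences, and in `x`'s
preference order exactly the agents preferred to `y` in `IA` or in `IB`
are placed above `y`. -/
def IsHybrid {α : Type*} (IA IB IH : MatP α) (x y : α) : Prop :=
  IH.W = IA.W ∧ IH.F = IA.F ∧ IH.adj = IA.adj ∧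
  (∀ z, z ≠ x → ∀ u v, (IH.pref z u v ↔ IA.pref z u v)) ∧
  (∀ z, (IA.pref x z y ∨ IB.pref x z y) → IH.pref x z y) ∧
  (∀ z, IA.adj x z → z ≠ y → ¬(IA.pref x z y ∨ IB.pref x z y) → IH.pref x y z)


lemma better_congr {α : Type*} {I J : MatP α} {z : α}
    (h : ∀ u v, I.pref z u v ↔ J.pref z u v) (o o' : Option α) :
    Better I z o o' ↔ Better J z o o' := by
  cases o <;> cases o' <;> simp [Better, h]

lemma voteO_congr {α : Type*} {I J : MatP α} {z : α}
    (h : ∀ u v, I.pref z u v ↔ J.pref z u v) (o o' : Option α) :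
    voteO I z o o' = voteO J z o o' := by
  unfold voteO
  rw [if_congr (better_congr h o o') rfl rfl, if_congr (better_congr h o' o) rfl rfl]

lemma pref_asymm {α : Type*} (I : MatP α) (x a b : α) (h : I.pref x a b) :
    ¬ I.pref x b a :=
  fun h' => I.pref_irrefl x a (I.pref_trans x a b a h h')

/-- For every matching `M` containing the edge `{x,y}` and every matching `M'`,
the popularity margin in the hybrid instance equals the popularity margin in
one of the two input instances. -/
theorem margin_hybrid_eq {α : Type*} [DecidableEq α]
    (IA IB IH : MatP α) (x y : α)
    (hsame : SameExcept IA IB x)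
    (he : IA.adj x y)
    (hH : IsHybrid IA IB IH x y)
    (M M' : α → Option α) (hM : IsMatching IA M) (hM' : IsMatching IA M')
    (hMx : M x = some y) :
    margin IH M M' = margin IA M M' ∨ margin IH M M' = margin IB M M' := by
  obtain ⟨hW, hF, hadj, hprefAB⟩ := hsame
  obtain ⟨hWH, hFH, hadjH, hprefH, hHa, hHb⟩ := hH
  have hx : x ∈ IA.W ∪ IA.F := by
    rcases IA.adj_bipartite x y he with ⟨h1, _⟩ | ⟨h1, _⟩
    · exact Finset.mem_union_left _ h1
    · exact Finset.mem_union_right _ h1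
  have sumH : margin IH M M' = voteO IH x (M x) (M' x) +
      ∑ z ∈ (IA.W ∪ IA.F).erase x, voteO IA z (M z) (M' z) := by
    unfold margin
    rw [hWH, hFH, ← Finset.add_sum_erase _ _ hx]
    congr 1
    exact Finset.sum_congr rfl
      (fun z hz => voteO_congr (hprefH z (Finset.ne_of_mem_erase hz)) _ _)
  have sumA : margin IA M M' = voteO IA x (M x) (M' x) +
      ∑ z ∈ (IA.W ∪ IA.F).erase x, voteO IA z (M z) (M' z) := by
    unfold margin; rw [← Finset.add_sum_erase _ _ hx]
  have sumB : margin IB M M' = voteO IB x (M x) (M' x) +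
      ∑ z ∈ (IA.W ∪ IA.F).erase x, voteO IA z (M z) (M' z) := by
    unfold margin
    rw [← hW, ← hF, ← Finset.add_sum_erase _ _ hx]
    congr 1
    exact Finset.sum_congr rfl (fun z hz =>
      (voteO_congr (fun u v => hprefAB z (Finset.ne_of_mem_erase hz) u v) _ _).symm)
  cases hM'x : M' x with
  | none =>
    left
    rw [sumH, sumA, hMx, hM'x]
    simp [voteO, Better]
  | some z =>
    by_cases hzy : z = y
    · left
      rw [sumH, sumA, hMx, hM'x, hzy]
      simp [voteO, Better, IH.pref_irrefl, IA.pref_irrefl]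
    · have hadjz : IA.adj x z := hM'.1 x z hM'x
      by_cases hA : IA.pref x z y
      · left
        have hHzy : IH.pref x z y := hHa z (Or.inl hA)
        rw [sumH, sumA, hMx, hM'x]
        congr 1
        simp [voteO, Better, pref_asymm IH x z y hHzy, hHzy,
          pref_asymm IA x z y hA, hA]
      · by_cases hB : IB.pref x z y
        · right
          have hHzy : IH.pref x z y := hHa z (Or.inr hB)
          rw [sumH, sumB, hMx, hM'x]
          congr 1
          simp [voteO, Better, pref_asymm IH x z y hHzy, hHzy,
            pref_asymm IB x z y hB, hB]
        · left
          have hHyz : IH.pref x y z := hHb z hadjz hzy (by tauto)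
          have hAyz : IA.pref x y z := by
            rcases IA.pref_total x y z he hadjz (Ne.symm hzy) with h | h
            · exact h
            · exact absurd h hA
          rw [sumH, sumA, hMx, hM'x]
          congr 1
          simp [voteO, Better, hHyz, hAyz]
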